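/- For n ≥ 1, the total mutual-visibility number and the dual mutual-visibility number of the Sierpiński graph S_3^n are both 3. Moreover, {0^n, 1^n, 2^n} is the unique maximum total mutual-visibility set, and there are exactly 4 maximum dual mutual-visibility sets: {0^n,1^n,2^n} and the three sets {i^n, i^{n−1}j, i^{n−1}k} with {i,j,k} = {0,1,2}. -/

import Mathlib

open SimpleGraph

/-- A walk is a shortest path: it is a path whose length equals the graph distance. -/
def IsShortest {V : Type*} (G : SimpleGraph V) {u v : V} (p : G.Walk u v) : Prop :=
  p.IsPath ∧ p.length = G.dist u v

/-- `u` and `v` are `X`-visible: some shortest `u,v`-path meets `X` only in `{u,v}`. -/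
def Visible {V : Type*} (G : SimpleGraph V) (X : Set V) (u v : V) : Prop :=
  ∃ p : G.Walk u v, IsShortest G p ∧ ∀ w ∈ p.support, w ∈ X → w = u ∨ w = v

/-- `u` and `v` are `X`-positionable: every shortest `u,v`-path meets `X` only in `{u,v}`. -/
def Positionable {V : Type*} (G : SimpleGraph V) (X : Set V) (u v : V) : Prop :=
  ∀ p : G.Walk u v, IsShortest G p → ∀ w ∈ p.support, w ∈ X → w = u ∨ w = v

def MutualVisibilitySet {V : Type*} (G : SimpleGraph V) (X : Set V) : Prop :=
  ∀ u ∈ X, ∀ v ∈ X, Visible G X u v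

def TotalMVSet {V : Type*} (G : SimpleGraph V) (X : Set V) : Prop :=
  ∀ u v : V, Visible G X u v

def OuterMVSet {V : Type*} (G : SimpleGraph V) (X : Set V) : Prop :=
  MutualVisibilitySet G X ∧ ∀ u ∈ X, ∀ v ∉ X, Visible G X u v

def DualMVSet {V : Type*} (G : SimpleGraph V) (X : Set V) : Prop :=
  MutualVisibilitySet G X ∧ ∀ u ∉ X, ∀ v ∉ X, Visible G X u v

def GeneralPositionSet {V : Type*} (G : SimpleGraph V) (X : Set V) : Prop :=
  ∀ u ∈ X, ∀ v ∈ X, Positionable G X u v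

def TotalGPSet {V : Type*} (G : SimpleGraph V) (X : Set V) : Prop :=
  ∀ u v : V, Positionable G X u v

def OuterGPSet {V : Type*} (G : SimpleGraph V) (X : Set V) : Prop :=
  GeneralPositionSet G X ∧ ∀ u ∈ X, ∀ v ∉ X, Positionable G X u v

def DualGPSet {V : Type*} (G : SimpleGraph V) (X : Set V) : Prop :=
  GeneralPositionSet G X ∧ ∀ u ∉ X, ∀ v ∉ X, Positionable G X u v

/-- The maximum cardinality of a set of vertices satisfying `P`. -/
noncomputable def maxCard {V : Type*} (P : Set V → Prop) : ℕ :=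
  sSup {n : ℕ | ∃ X : Set V, P X ∧ X.ncard = n}

/-- The number of sets achieving `maxCard P`. -/
noncomputable def numMaxSets {V : Type*} (P : Set V → Prop) : ℕ :=
  {X : Set V | P X ∧ X.ncard = maxCard P}.ncard

/-- A vertex is simplicial if its neighborhood induces a complete graph. -/
def Simplicial {V : Type*} (G : SimpleGraph V) (v : V) : Prop :=
  ∀ u w : V, G.Adj v u → G.Adj v w → u ≠ w → G.Adj u w

/-- A set of vertices is convex: every shortest path between its vertices stays inside it. -/
def ConvexSet {V : Type*} (G : SimpleGraph V) (S : Set V) : Prop :=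
  ∀ u ∈ S, ∀ v ∈ S, ∀ p : G.Walk u v, IsShortest G p → ∀ w ∈ p.support, w ∈ S

/-- The Sierpiński graph `S_p^n` on vertex set `[p]_0^n`. -/
def Sierpinski (p n : ℕ) : SimpleGraph (Fin n → Fin p) where
  Adj i j := ∃ h : Fin n, (∀ t, t < h → i t = j t) ∧ i h ≠ j h ∧
      (∀ t, h < t → i t = j h ∧ j t = i h)
  symm := by
    constructor
    rintro i j ⟨h, h1, h2, h3⟩
    exact ⟨h, fun t ht => (h1 t ht).symm, fun e => h2 e.symm,
      fun t ht => ⟨(h3 t ht).2, (h3 t ht).1⟩⟩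
  loopless := by
    constructor
    rintro i ⟨h, -, h2, -⟩
    exact h2 rfl

/-- The vertex `i^n` of `S_3^n`. -/
def corner (n : ℕ) (i : Fin 3) : Fin n → Fin 3 := fun _ => i

/-- The vertex `i^{n-1}j` of `S_3^n`. -/
def almostCorner (n : ℕ) (i j : Fin 3) : Fin n → Fin 3 :=
  fun t => if (t : ℕ) = n - 1 then j else i

/-!
In `S_p^{m+1}` the neighbours of a vertex `x` are its siblings (the words that differ from `x`
only in the last letter), which form a clique, and, unless `x = i^{m+1}` is a corner, one more
vertex `link x`. Corners are simplicial, hence internal to no geodesic, so together they form a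
total mutual-visibility set. A sibling of a non-corner `x` and `link x` are at distance two with
`x` as their only common neighbour. Hence no total mutual-visibility set contains `x`, and a dual
one `X` containing `x` contains either `link x` or all siblings of `x`, but not both. Two
configurations at distance three whose geodesics all pass through `X` rule out `link x ∈ X`, and
rule out the siblings of `x` unless they form the clique `{i^m e}` of a corner. This clique is a
dual mutual-visibility set, since every excursion of a walk into it can be rerouted through
`i^{m-1}eg` and `i^{m-1}ge`. Finally `i^{m+1}` and `j^{m+1}` cannot see each other past `i^m j`:
every other neighbour of `i^{m+1}` is as far from `j^{m+1}` as `i^{m+1}` itself.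
-/

namespace SimpleGraph

variable {V : Type*} {G : SimpleGraph V} {X : Set V} {u v w w₁ w₂ : V}

lemma isShortest_nil (u : V) : IsShortest G (Walk.nil : G.Walk u u) := by
  simp [IsShortest]

lemma isShortest_toWalk (h : G.Adj u v) : IsShortest G h.toWalk := by
  simp [IsShortest, h.ne, dist_eq_one_iff_adj.mpr h]

lemma visible_self (X : Set V) (u : V) : Visible G X u u :=
  ⟨.nil, isShortest_nil u, by simp⟩

lemma visible_of_adj (X : Set V) (h : G.Adj u v) : Visible G X u v :=
  ⟨h.toWalk, isShortest_toWalk h, by simp⟩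

lemma visible_of_walk (w : G.Walk u v) (hw : w.length ≤ G.dist u v)
    (hX : ∀ y ∈ w.support, y ∉ X) : Visible G X u v := by
  classical
  refine ⟨w.bypass, ⟨w.bypass_isPath, ?_⟩, fun y hy hyX => ?_⟩
  · exact le_antisymm (w.length_bypass_le_length.trans hw) (dist_le _)
  · exact absurd hyX (hX y (w.support_bypass_subset_support hy))

lemma mutualVisibilitySet_of_isClique (hX : G.IsClique X) : MutualVisibilitySet G X := by
  intro u hu v hv
  obtain rfl | huv := eq_or_ne u v
  · exact visible_self X u
  · exact visible_of_adj X (hX hu hv huv)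

lemma TotalMVSet.dualMVSet (h : TotalMVSet G X) : DualMVSet G X :=
  ⟨fun u _ v _ => h u v, fun u _ v _ => h u v⟩

lemma Simplicial.exists_shorter {c : V} (hc : Simplicial G c) :
    ∀ {u v : V} (p : G.Walk u v), p.IsPath → c ∈ p.support → c ≠ u → c ≠ v →
      ∃ q : G.Walk u v, q.length < p.length
  | _, _, .nil, _, hmem, hu, _ => absurd (by simpa using hmem) hu
  | _, _, .cons _ .nil, _, hmem, hu, hv => by simp_all
  | u, _, .cons (v := b) h (.cons (v := d) h' q), hp, hmem, hu, hv => by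
    by_cases hcb : c = b
    · subst hcb
      have hud : u ≠ d := fun e => ((Walk.cons_isPath_iff _ _).mp hp).2 (by simp [e])
      exact ⟨.cons (hc _ _ h.symm h' hud) q, by simp⟩
    · obtain ⟨q', hq'⟩ := Simplicial.exists_shorter hc (.cons h' q) hp.of_cons
        (by simpa [hu] using hmem) hcb hv
      exact ⟨.cons h q', by simpa using hq'⟩

lemma Simplicial.eq_or_eq_of_mem_support {c : V} (hc : Simplicial G c) {p : G.Walk u v}
    (hp : IsShortest G p) (hmem : c ∈ p.support) : c = u ∨ c = v := by
  by_contra! hne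
  obtain ⟨q, hq⟩ := hc.exists_shorter p hp.1 hmem hne.1 hne.2
  exact (dist_le q).not_gt (hp.2 ▸ hq)

lemma totalMVSet_of_simplicial (hG : G.Preconnected) (hX : ∀ x ∈ X, Simplicial G x) :
    TotalMVSet G X := by
  intro u v
  obtain ⟨p, hp⟩ := (hG u v).exists_path_of_dist
  exact ⟨p, hp, fun w hw hwX => (hX w hwX).eq_or_eq_of_mem_support hp hw⟩

lemma Reachable.dist_map_le {W : Type*} {G' : SimpleGraph W} (f : G →g G')
    (h : G.Reachable u v) : G'.dist (f u) (f v) ≤ G.dist u v := by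
  obtain ⟨q, hq⟩ := h.exists_walk_length_eq_dist
  exact (dist_le (q.map f)).trans (by simp [hq])

lemma dist_eq_two_of_not_adj (h₁ : G.Adj u w) (h₂ : G.Adj w v) (hne : u ≠ v)
    (hnadj : ¬ G.Adj u v) : G.dist u v = 2 :=
  le_antisymm (dist_le (.cons h₁ (.cons h₂ .nil)))
    ((Walk.cons h₁ (.cons h₂ .nil)).reachable.one_lt_dist_of_ne_of_not_adj hne hnadj)

lemma dist_eq_three_of_not_adj (h₁ : G.Adj u w₁) (h₂ : G.Adj w₁ w₂) (h₃ : G.Adj w₂ v)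
    (hne : u ≠ v) (hnadj : ¬ G.Adj u v) (hno : ∀ w, G.Adj u w → ¬ G.Adj w v) :
    G.dist u v = 3 := by
  have hr : G.Reachable u v := ⟨.cons h₁ (.cons h₂ (.cons h₃ .nil))⟩
  have hle : G.dist u v ≤ 3 := dist_le (.cons h₁ (.cons h₂ (.cons h₃ .nil)))
  have hgt : 1 < G.dist u v := hr.one_lt_dist_of_ne_of_not_adj hne hnadj
  by_contra hd
  obtain ⟨p, hp⟩ := hr.exists_walk_length_eq_dist
  rw [show G.dist u v = 2 by omega] at hp
  match p, hp with
  | .cons h (.cons h' .nil), _ => exact hno _ h h'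

lemma not_visible_of_dist_eq_two (hd : G.dist u v = 2)
    (hX : ∀ w, G.Adj u w → G.Adj w v → w ∈ X) : ¬ Visible G X u v := by
  rintro ⟨p, ⟨-, hp⟩, hvis⟩
  rw [hd] at hp
  match p, hp with
  | .cons h (.cons h' .nil), _ =>
    rcases hvis _ (by simp) (hX _ h h') with e | e
    exacts [h.ne e.symm, h'.ne e]

lemma not_visible_of_dist_eq_three (hd : G.dist u v = 3)
    (hX : ∀ w₁ w₂, G.Adj u w₁ → G.Adj w₁ w₂ → G.Adj w₂ v → w₁ ∈ X ∨ w₂ ∈ X) :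
    ¬ Visible G X u v := by
  rintro ⟨p, ⟨-, hp⟩, hvis⟩
  rw [hd] at hp
  match p, hp with
  | .cons h₁ (.cons h₂ (.cons h₃ .nil)), _ =>
    have hshort : ∀ w : G.Walk u v, w.length ≠ 1 := fun w hw => by
      have := dist_le w
      omega
    rcases hX _ _ h₁ h₂ h₃ with hw | hw
    · rcases hvis _ (by simp) hw with rfl | rfl
      exacts [h₁.ne rfl, hshort h₁.toWalk rfl]
    · rcases hvis _ (by simp) hw with rfl | rfl
      exacts [hshort h₃.toWalk rfl, h₃.ne rfl]

lemma Walk.exists_exit {T : Set V} : ∀ {b v : V} (q : G.Walk b v), b ∈ T → v ∉ T →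
    ∃ b' u', b' ∈ T ∧ u' ∉ T ∧ G.Adj b' u' ∧
      ∃ (q₁ : G.Walk b b') (q₂ : G.Walk u' v), q₁.length + q₂.length + 1 = q.length
  | _, _, .nil, hb, hv => absurd hb hv
  | b, _, .cons (v := c) h q, hb, hv => by
    by_cases hc : c ∈ T
    · obtain ⟨b', u', hb', hu', h', q₁, q₂, hlen⟩ := q.exists_exit hc hv
      exact ⟨b', u', hb', hu', h', .cons h q₁, q₂, by rw [length_cons, length_cons]; omega⟩
    · exact ⟨b, c, hb, hc, h, .nil, q, by simp⟩

lemma exists_walk_avoiding {T : Set V}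
    (hdetour : ∀ ⦃u b b' u'⦄, u ∉ T → u' ∉ T → b ∈ T → b' ∈ T → G.Adj u b → G.Adj b' u' →
      ∀ q : G.Walk b b', ∃ w : G.Walk u u', w.length ≤ q.length + 2 ∧ ∀ y ∈ w.support, y ∉ T)
    (p : G.Walk u v) (hu : u ∉ T) (hv : v ∉ T) :
    ∃ w : G.Walk u v, w.length ≤ p.length ∧ ∀ y ∈ w.support, y ∉ T := by
  induction hn : p.length using Nat.strong_induction_on generalizing u p with
  | _ n ih =>
  match p with
  | .nil => exact ⟨.nil, by simp, by simpa using hu⟩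
  | .cons (v := b) h q =>
    subst hn
    by_cases hb : b ∈ T
    · obtain ⟨b', u', hb', hu', h', q₁, q₂, hlen⟩ := q.exists_exit hb hv
      obtain ⟨w₁, hw₁, hw₁T⟩ := hdetour hu hu' hb hb' h h' q₁
      obtain ⟨w₂, hw₂, hw₂T⟩ := ih _ (by rw [Walk.length_cons]; omega) q₂ hu' rfl
      refine ⟨w₁.append w₂, by rw [Walk.length_append, Walk.length_cons]; omega, fun y hy => ?_⟩
      rcases (Walk.mem_support_append_iff _ _).mp hy with hy | hy
      exacts [hw₁T y hy, hw₂T y hy]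
    · obtain ⟨w, hw, hwT⟩ := ih _ (by simp) q hb rfl
      refine ⟨.cons h w, by simpa using hw, fun y hy => ?_⟩
      rcases List.mem_cons.mp (Walk.support_cons h w ▸ hy) with rfl | hy
      exacts [hu, hwT y hy]

end SimpleGraph

lemma maxCard_eq {V : Type*} {P : Set V → Prop} {k : ℕ} (hS : ∃ S, P S ∧ S.ncard = k)
    (hle : ∀ X, P X → X.ncard ≤ k) : maxCard P = k := by
  have hbdd : BddAbove {n : ℕ | ∃ X : Set V, P X ∧ X.ncard = n} := ⟨k, by
    rintro _ ⟨X, hX, rfl⟩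
    exact hle X hX⟩
  refine le_antisymm (csSup_le ?_ ?_) (le_csSup hbdd hS)
  · obtain ⟨S, hS⟩ := hS
    exact ⟨k, S, hS⟩
  · rintro _ ⟨X, hX, rfl⟩
    exact hle X hX

namespace Sierpinski

section Structure

variable {p m : ℕ} {x y z : Fin (m+1) → Fin p} {e : Fin p} {t : Fin (m+1)}

def setLast (x : Fin (m+1) → Fin p) (e : Fin p) : Fin (m+1) → Fin p :=
  Function.update x (Fin.last m) e

def Sib (x y : Fin (m+1) → Fin p) : Prop := ∀ t ≠ Fin.last m, x t = y t

def NonCorner (x : Fin (m+1) → Fin p) : Prop := ∃ t, x t ≠ x (Fin.last m)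

noncomputable def pivot (x : Fin (m+1) → Fin p) : Fin (m+1) :=
  if h : (Finset.univ.filter fun t => x t ≠ x (Fin.last m)).Nonempty then
    (Finset.univ.filter fun t => x t ≠ x (Fin.last m)).max' h
  else 0

/-- The neighbour of a non-corner vertex `x` outside the clique of its siblings. -/
noncomputable def link (x : Fin (m+1) → Fin p) : Fin (m+1) → Fin p := fun t =>
  if t < pivot x then x t else if t = pivot x then x (Fin.last m) else x (pivot x)

@[simp] lemma setLast_last : setLast x e (Fin.last m) = e := by simp [setLast]

lemma setLast_of_ne (ht : t ≠ Fin.last m) : setLast x e t = x t :=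
  Function.update_of_ne ht _ _

@[simp] lemma setLast_apply_last : setLast x (x (Fin.last m)) = x := by simp [setLast]

lemma setLast_ne_self (he : e ≠ x (Fin.last m)) : setLast x e ≠ x := fun h =>
  he (by rw [← congrFun h (Fin.last m), setLast_last])

lemma Sib.refl (x : Fin (m+1) → Fin p) : Sib x x := fun _ _ => rfl

lemma Sib.symm (h : Sib x y) : Sib y x := fun t ht => (h t ht).symm

lemma Sib.trans (h : Sib x y) (h' : Sib y z) : Sib x z := fun t ht => (h t ht).trans (h' t ht)

lemma sib_setLast (x : Fin (m+1) → Fin p) (e : Fin p) : Sib (setLast x e) x :=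
  fun _ ht => setLast_of_ne ht

lemma Sib.eq_setLast (h : Sib x y) : y = setLast x (y (Fin.last m)) := by
  funext t
  by_cases ht : t = Fin.last m
  · simp [ht]
  · rw [setLast_of_ne ht, h t ht]

lemma Sib.ne_last (h : Sib x y) (hne : x ≠ y) : x (Fin.last m) ≠ y (Fin.last m) := fun hl =>
  hne (by rw [h.eq_setLast, ← hl, setLast_apply_last])

lemma NonCorner.apply_pivot_ne (hx : NonCorner x) : x (pivot x) ≠ x (Fin.last m) := by
  obtain ⟨t, ht⟩ := hx
  have hne : (Finset.univ.filter fun t => x t ≠ x (Fin.last m)).Nonempty := ⟨t, by simp [ht]⟩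
  rw [pivot, dif_pos hne]
  simpa using Finset.max'_mem _ hne

lemma apply_of_pivot_lt (ht : pivot x < t) : x t = x (Fin.last m) := by
  by_contra hxt
  rw [pivot, dif_pos ⟨t, by simp [hxt]⟩] at ht
  exact (Finset.le_max' _ t (by simp [hxt])).not_gt ht

lemma NonCorner.pivot_lt_last (hx : NonCorner x) : pivot x < Fin.last m :=
  (Fin.le_last _).lt_of_ne fun h => hx.apply_pivot_ne (h ▸ rfl)

lemma NonCorner.pivot_ne_last (hx : NonCorner x) : pivot x ≠ Fin.last m :=
  hx.pivot_lt_last.ne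

lemma pivot_eq (h₁ : x t ≠ x (Fin.last m)) (h₂ : ∀ s, t < s → x s = x (Fin.last m)) :
    pivot x = t := by
  have hne : (Finset.univ.filter fun t => x t ≠ x (Fin.last m)).Nonempty := ⟨t, by simp [h₁]⟩
  rw [pivot, dif_pos hne]
  refine le_antisymm (Finset.max'_le _ _ _ fun s hs => ?_) (Finset.le_max' _ _ (by simp [h₁]))
  by_contra hts
  exact (Finset.mem_filter.mp hs).2 (h₂ s (not_le.mp hts))

lemma link_apply_lt (ht : t < pivot x) : link x t = x t := by simp [link, ht]

lemma link_apply_pivot : link x (pivot x) = x (Fin.last m) := by simp [link]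

lemma link_apply_gt (ht : pivot x < t) : link x t = x (pivot x) := by
  simp [link, ht.not_gt, ht.ne']

lemma NonCorner.link_last (hx : NonCorner x) : link x (Fin.last m) = x (pivot x) :=
  link_apply_gt hx.pivot_lt_last

lemma NonCorner.pivot_link (hx : NonCorner x) : pivot (link x) = pivot x := by
  refine pivot_eq ?_ fun s hs => ?_
  · rw [link_apply_pivot, hx.link_last]
    exact hx.apply_pivot_ne.symm
  · rw [link_apply_gt hs, hx.link_last]

lemma nonCorner_link (hx : NonCorner x) : NonCorner (link x) :=
  ⟨pivot x, by rw [link_apply_pivot, hx.link_last]; exact hx.apply_pivot_ne.symm⟩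

lemma NonCorner.link_link (hx : NonCorner x) : link (link x) = x := by
  funext t
  have hp := hx.pivot_link
  rcases lt_trichotomy t (pivot x) with ht | rfl | ht
  · rw [link_apply_lt (hp ▸ ht), link_apply_lt ht]
  · rw [← hp, link_apply_pivot, hp, hx.link_last]
  · rw [link_apply_gt (hp ▸ ht), hp, link_apply_pivot, apply_of_pivot_lt ht]

lemma eq_of_link_eq (hx : NonCorner x) (hy : NonCorner y) (h : link x = link y) : x = y := by
  rw [← hx.link_link, h, hy.link_link]

lemma NonCorner.not_sib_link (hx : NonCorner x) : ¬ Sib x (link x) := fun h => by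
  have := h _ hx.pivot_ne_last
  rw [link_apply_pivot] at this
  exact hx.apply_pivot_ne this

/-- Between two cliques of siblings there is at most one link edge. -/
lemma eq_of_sib_of_sib_link (hx : NonCorner x) (hy : NonCorner y) (h : Sib x y)
    (hl : Sib (link x) (link y)) : x = y := by
  rcases lt_trichotomy (pivot x) (pivot y) with hxy | hxy | hxy
  · have := hl _ hx.pivot_ne_last
    rw [link_apply_pivot, link_apply_lt hxy, ← h _ hx.pivot_ne_last] at this
    exact absurd this.symm hx.apply_pivot_ne
  · by_contra hne
    have := hl _ hx.pivot_ne_last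
    rw [link_apply_pivot, hxy, link_apply_pivot] at this
    exact h.ne_last hne this
  · have := hl _ hy.pivot_ne_last
    rw [link_apply_pivot, link_apply_lt hxy, h _ hy.pivot_ne_last] at this
    exact absurd this hy.apply_pivot_ne

lemma adj_iff : (Sierpinski p (m+1)).Adj x y ↔
    (Sib x y ∧ x ≠ y) ∨ (NonCorner x ∧ y = link x) := by
  constructor
  · rintro ⟨h, hlt, hne, hgt⟩
    rcases (Fin.le_last h).lt_or_eq with hl | rfl
    · have hxl : x (Fin.last m) = y h := (hgt _ hl).1
      have hx : NonCorner x := ⟨h, hxl ▸ hne⟩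
      have hp : pivot x = h := pivot_eq (hxl ▸ hne) fun s hs => hxl ▸ (hgt s hs).1
      refine .inr ⟨hx, funext fun t => ?_⟩
      rcases lt_trichotomy t h with ht | rfl | ht
      · rw [link_apply_lt (hp ▸ ht), hlt t ht]
      · rw [← hp, link_apply_pivot, hp, hxl]
      · rw [link_apply_gt (hp ▸ ht), hp, (hgt t ht).2]
    · exact .inl ⟨fun t ht => hlt t ((Fin.le_last t).lt_of_ne ht), fun e => hne (e ▸ rfl)⟩
  · rintro (⟨hs, hne⟩ | ⟨hx, rfl⟩)
    · exact ⟨Fin.last m, fun t ht => hs t ht.ne, hs.ne_last hne,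
        fun t ht => absurd ht (Fin.le_last t).not_gt⟩
    · refine ⟨pivot x, fun t ht => (link_apply_lt ht).symm, ?_, fun t ht => ?_⟩
      · rw [link_apply_pivot]
        exact hx.apply_pivot_ne
      · rw [link_apply_gt ht, link_apply_pivot, apply_of_pivot_lt ht]
        exact ⟨rfl, rfl⟩

lemma adj_of_sib (h : Sib x y) (hne : x ≠ y) : (Sierpinski p (m+1)).Adj x y :=
  adj_iff.mpr (.inl ⟨h, hne⟩)

lemma adj_link (hx : NonCorner x) : (Sierpinski p (m+1)).Adj x (link x) :=
  adj_iff.mpr (.inr ⟨hx, rfl⟩)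

lemma sib_or_link_of_adj (h : (Sierpinski p (m+1)).Adj x y) :
    Sib x y ∨ (NonCorner x ∧ y = link x) :=
  (adj_iff.mp h).imp_left And.left

/-- The penultimate coordinate; it is the last one when `m = 0`. -/
def pen (m : ℕ) : Fin (m+1) := ⟨m - 1, by omega⟩

lemma NonCorner.pos (hx : NonCorner x) : 0 < m := by
  have := hx.pivot_lt_last
  simp only [Fin.lt_def, Fin.val_last] at this
  omega

lemma pen_lt_last (hm : 0 < m) : pen m < Fin.last m := by
  simp only [pen, Fin.lt_def, Fin.val_last]
  omega

lemma eq_last_of_pen_lt (ht : pen m < t) : t = Fin.last m := by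
  simp only [pen, Fin.lt_def] at ht
  ext
  simp only [Fin.val_last]
  omega

lemma le_pen_of_lt_last (ht : t < Fin.last m) : t ≤ pen m := by
  simp only [pen, Fin.lt_def, Fin.le_def, Fin.val_last] at ht ⊢
  omega

lemma pivot_eq_pen (h : x (pen m) ≠ x (Fin.last m)) : pivot x = pen m :=
  pivot_eq h fun s hs => by rw [eq_last_of_pen_lt hs]

end Structure

section Visibility

variable {p m : ℕ} {x y z u v w w₁ w₂ : Fin (m+1) → Fin p} {e : Fin p}
  {X : Set (Fin (m+1) → Fin p)}

lemma not_visible_setLast_link (hxX : x ∈ X) (hx : NonCorner x) (he : e ≠ x (Fin.last m)) :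
    ¬ Visible (Sierpinski p (m+1)) X (setLast x e) (link x) := by
  have hs := sib_setLast x e
  have hne := setLast_ne_self he
  refine SimpleGraph.not_visible_of_dist_eq_two ?_ fun w h₁ h₂ => ?_
  · refine SimpleGraph.dist_eq_two_of_not_adj (adj_of_sib hs hne) (adj_link hx)
      (fun h => hx.not_sib_link (h ▸ hs.symm)) fun h => ?_
    rcases sib_or_link_of_adj h with h | ⟨hs', hl⟩
    · exact hx.not_sib_link (hs.symm.trans h)
    · exact hne (eq_of_link_eq hs' hx hl.symm)
  · rcases sib_or_link_of_adj h₁ with h₁ | ⟨hs', rfl⟩ <;>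
      rcases sib_or_link_of_adj h₂ with h₂ | ⟨hw, hl⟩
    · exact absurd ((hs.symm.trans h₁).trans h₂) hx.not_sib_link
    · rwa [eq_of_link_eq hw hx hl.symm]
    · exact absurd (eq_of_sib_of_sib_link hs' hx hs h₂) hne
    · rw [hs'.link_link] at hl
      exact absurd (hl ▸ hs) fun h => hx.not_sib_link h.symm

lemma TotalMVSet.not_nonCorner (hX : TotalMVSet (Sierpinski p (m+1)) X) (hxX : x ∈ X) :
    ¬ NonCorner x := fun hx =>
  not_visible_setLast_link hxX hx hx.apply_pivot_ne (hX _ _)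

lemma DualMVSet.setLast_mem_iff (hX : DualMVSet (Sierpinski p (m+1)) X) (hxX : x ∈ X)
    (hx : NonCorner x) (he : e ≠ x (Fin.last m)) : setLast x e ∈ X ↔ link x ∉ X := by
  have hnv := not_visible_setLast_link hxX hx he
  exact ⟨fun hs hl => hnv (hX.1 _ hs _ hl), fun hl => by_contra fun hs => hnv (hX.2 _ hs _ hl)⟩

section SibLinkSib

variable (hx : NonCorner x) (hu : Sib u x) (hv : Sib v (link x)) (hux : u ≠ x)
  (hvx : v ≠ link x)
include hx hu hv hux hvx

lemma dist_eq_three_of_sib_link_sib : (Sierpinski p (m+1)).dist u v = 3 := by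
  have hnsib : ¬ Sib u v := fun h => hx.not_sib_link (hu.symm.trans (h.trans hv))
  have hlink : ∀ w, NonCorner w → Sib w u → Sib (link w) v → w = x := fun w hw h h' =>
    eq_of_sib_of_sib_link hw hx (h.trans hu) (h'.trans hv)
  refine SimpleGraph.dist_eq_three_of_not_adj (adj_of_sib hu hux) (adj_link hx)
    (adj_of_sib hv.symm hvx.symm) (fun h => hnsib (h ▸ .refl u)) (fun h => ?_)
    (fun w h₁ h₂ => ?_)
  · rcases sib_or_link_of_adj h with hs | ⟨hu', rfl⟩
    · exact hnsib hs
    · exact hux (hlink u hu' (.refl u) (.refl _))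
  · rcases sib_or_link_of_adj h₁ with hs | ⟨hu', rfl⟩ <;>
      rcases sib_or_link_of_adj h₂ with hs' | ⟨hw, rfl⟩
    · exact hnsib (hs.trans hs')
    · exact hvx (by rw [hlink w hw hs.symm (.refl _)])
    · exact hux (hlink u hu' (.refl u) hs')
    · exact hnsib (by rw [hu'.link_link]; exact .refl u)

lemma eq_or_sib_link_link_of_adj_adj_adj (h₁ : (Sierpinski p (m+1)).Adj u w₁)
    (h₂ : (Sierpinski p (m+1)).Adj w₁ w₂) (h₃ : (Sierpinski p (m+1)).Adj w₂ v) :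
    w₁ = x ∨ (NonCorner u ∧ NonCorner v ∧ Sib (link u) (link v)) := by
  have hnsib : ¬ Sib u v := fun h => hx.not_sib_link (hu.symm.trans (h.trans hv))
  have hlink : ∀ w, NonCorner w → Sib w u → Sib (link w) v → w = x := fun w hw h h' =>
    eq_of_sib_of_sib_link hw hx (h.trans hu) (h'.trans hv)
  rcases sib_or_link_of_adj h₁ with hs₁ | ⟨hu', rfl⟩ <;>
    rcases sib_or_link_of_adj h₃ with hs₃ | ⟨hw₂, rfl⟩ <;>
    rcases sib_or_link_of_adj h₂ with hs₂ | ⟨hw₁, rfl⟩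
  · exact absurd (hs₁.trans (hs₂.trans hs₃)) hnsib
  · exact .inl (hlink w₁ hw₁ hs₁.symm hs₃)
  · exact absurd (hlink w₂ hw₂ (hs₁.trans hs₂).symm (.refl _)) fun h => hvx (by rw [h])
  · exact absurd (hs₁.trans (by rw [hw₁.link_link]; exact .refl w₁)) hnsib
  · exact absurd (hlink u hu' (.refl u) (hs₂.trans hs₃)) hux
  · exact absurd (hu'.link_link ▸ hs₃) hnsib
  · exact .inr ⟨hu', nonCorner_link hw₂, by rwa [hw₂.link_link]⟩
  · exact absurd (hlink u hu' (.refl u) (by rw [hw₁.link_link]; exact .refl _)) hux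

end SibLinkSib

lemma sib_link_link_of_pivot_lt (hv : NonCorner v) (h : Sib (link u) (link v))
    (hlt : pivot u < pivot v) :
    u (pivot u) = v (Fin.last m) ∧ v (pivot u) = u (Fin.last m) := by
  constructor
  · have := h _ hv.pivot_ne_last
    rwa [link_apply_gt hlt, link_apply_pivot] at this
  · have := h _ (hlt.trans hv.pivot_lt_last).ne
    rwa [link_apply_pivot, link_apply_lt hlt, eq_comm] at this

lemma not_sib_link_setLast_link_setLast (hx : NonCorner x)
    (hu : NonCorner (setLast x (x (pivot x))))
    (hv : NonCorner (setLast (link x) (x (Fin.last m)))) :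
    ¬ Sib (link (setLast x (x (pivot x)))) (link (setLast (link x) (x (Fin.last m)))) := by
  intro h
  have hac := hx.apply_pivot_ne
  have key : ∀ s ≠ Fin.last m, setLast x (x (pivot x)) s = x (Fin.last m) →
      setLast (link x) (x (Fin.last m)) s = x (pivot x) → pivot x < s := by
    intro s hs h₁ h₂
    rw [setLast_of_ne hs] at h₁ h₂
    rcases lt_trichotomy s (pivot x) with hlt | rfl | hgt
    · rw [link_apply_lt hlt, h₁] at h₂
      exact absurd h₂.symm hac
    · exact absurd h₁ hac
    · exact hgt
  rcases lt_trichotomy (pivot (setLast x (x (pivot x))))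
    (pivot (setLast (link x) (x (Fin.last m)))) with hlt | heq | hgt
  · obtain ⟨h₁, h₂⟩ := sib_link_link_of_pivot_lt hv h hlt
    rw [setLast_last] at h₁ h₂
    have hH := key _ (hlt.trans hv.pivot_lt_last).ne h₁ h₂
    have := apply_of_pivot_lt hlt
    rw [setLast_last, setLast_of_ne hv.pivot_ne_last, apply_of_pivot_lt (hH.trans hlt)] at this
    exact hac this.symm
  · have := h _ hu.pivot_ne_last
    rw [link_apply_pivot, heq, link_apply_pivot, setLast_last, setLast_last] at this
    exact hac this
  · obtain ⟨h₁, h₂⟩ := sib_link_link_of_pivot_lt hu h.symm hgt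
    rw [setLast_last] at h₁ h₂
    have hH := key _ (hgt.trans hu.pivot_lt_last).ne h₂ h₁
    have := apply_of_pivot_lt hgt
    rw [setLast_last, setLast_of_ne hu.pivot_ne_last, link_apply_gt (hH.trans hgt)] at this
    exact hac this

/-- Every geodesic between the sibling `setLast x (x (pivot x))` of `x` and the sibling
`setLast (link x) (x (Fin.last m))` of `link x`, which both lie outside `X`, passes through `x`. -/
lemma DualMVSet.link_not_mem (hX : DualMVSet (Sierpinski p (m+1)) X) (hxX : x ∈ X)
    (hx : NonCorner x) : link x ∉ X := by
  intro hlX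
  have hu := sib_setLast x (x (pivot x))
  have hv := sib_setLast (link x) (x (Fin.last m))
  have hlast : x (Fin.last m) ≠ link x (Fin.last m) := by
    rw [hx.link_last]
    exact hx.apply_pivot_ne.symm
  have huX : setLast x (x (pivot x)) ∉ X := fun h =>
    (DualMVSet.setLast_mem_iff hX hxX hx hx.apply_pivot_ne).mp h hlX
  have hvX : setLast (link x) (x (Fin.last m)) ∉ X := fun h =>
    (DualMVSet.setLast_mem_iff hX hlX (nonCorner_link hx) hlast).mp h (by rwa [hx.link_link])
  have hux := setLast_ne_self hx.apply_pivot_ne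
  have hvx := setLast_ne_self hlast
  refine SimpleGraph.not_visible_of_dist_eq_three
    (dist_eq_three_of_sib_link_sib hx hu hv hux hvx) (fun w₁ w₂ h₁ h₂ h₃ => ?_) (hX.2 _ huX _ hvX)
  rcases eq_or_sib_link_link_of_adj_adj_adj hx hu hv hux hvx h₁ h₂ h₃ with rfl | ⟨hu', hv', h⟩
  · exact .inl hxX
  · exact absurd h (not_sib_link_setLast_link_setLast hx hu' hv')

section LinkSibLink

variable {y₁ y₂ : Fin (m+1) → Fin p} (hy₁ : NonCorner y₁) (hy₂ : NonCorner y₂) (hs : Sib y₁ y₂)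
  (hne : y₁ ≠ y₂)
include hy₁ hy₂ hs hne

lemma dist_link_link_eq_three : (Sierpinski p (m+1)).dist (link y₁) (link y₂) = 3 := by
  have hns : ¬ Sib (link y₁) (link y₂) := fun h => hne (eq_of_sib_of_sib_link hy₁ hy₂ hs h)
  refine SimpleGraph.dist_eq_three_of_not_adj (adj_link hy₁).symm (adj_of_sib hs hne)
    (adj_link hy₂) (fun h => hne (eq_of_link_eq hy₁ hy₂ h)) (fun h => ?_) (fun w h₁ h₂ => ?_)
  · rcases sib_or_link_of_adj h with h | ⟨-, h⟩
    · exact hns h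
    · rw [hy₁.link_link] at h
      exact hy₂.not_sib_link (h ▸ hs.symm)
  · rcases sib_or_link_of_adj h₁ with h₁ | ⟨-, rfl⟩ <;>
      rcases sib_or_link_of_adj h₂ with h₂ | ⟨hw, h₂⟩
    · exact hns (h₁.trans h₂)
    · rw [← eq_of_link_eq hy₂ hw h₂] at h₁
      exact hy₁.not_sib_link (hs.trans h₁.symm)
    · rw [hy₁.link_link] at h₂
      exact hy₂.not_sib_link (hs.symm.trans h₂)
    · rw [hy₁.link_link] at h₂
      exact hne (eq_of_link_eq hy₁ hy₂ h₂.symm)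

lemma eq_or_eq_or_sib_link_of_adj_adj_adj (h₁ : (Sierpinski p (m+1)).Adj (link y₁) w₁)
    (h₂ : (Sierpinski p (m+1)).Adj w₁ w₂) (h₃ : (Sierpinski p (m+1)).Adj w₂ (link y₂)) :
    w₁ = y₁ ∨ w₂ = y₂ ∨
      (NonCorner w₁ ∧ w₁ ≠ link y₁ ∧ Sib (link y₁) w₁ ∧ Sib (link w₁) (link y₂)) := by
  rcases sib_or_link_of_adj h₁ with hs₁ | ⟨-, rfl⟩
  · rcases sib_or_link_of_adj h₃ with hs₃ | ⟨hw₂, h₃'⟩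
    · rcases sib_or_link_of_adj h₂ with hs₂ | ⟨hw₁, rfl⟩
      · exact absurd (eq_of_sib_of_sib_link hy₁ hy₂ hs (hs₁.trans (hs₂.trans hs₃))) hne
      · exact .inr (.inr ⟨hw₁, h₁.ne.symm, hs₁, hs₃⟩)
    · exact .inr (.inl (eq_of_link_eq hw₂ hy₂ h₃'.symm))
  · exact .inl hy₁.link_link

end LinkSibLink

lemma not_sib_link_link_of_sib_link (hz : NonCorner z) (hzp : z (pen m) = z (Fin.last m))
    (hs : Sib z y) (hy : y (Fin.last m) ≠ z (Fin.last m)) (hw : w ≠ link z)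
    (hsw : Sib (link z) w) : ¬ Sib (link w) (link y) := by
  intro h
  have hm := hz.pos
  have hpen : pivot z < pen m := (le_pen_of_lt_last hz.pivot_lt_last).lt_of_ne fun e =>
    hz.apply_pivot_ne (e ▸ hzp)
  have hpy : pivot y = pen m :=
    pivot_eq_pen (by rwa [← hs _ (pen_lt_last hm).ne, hzp, ne_comm])
  have hwp : w (pen m) = z (pivot z) := by
    rw [← hsw _ (pen_lt_last hm).ne, link_apply_gt hpen]
  have hpw : pivot w = pen m := pivot_eq_pen (by
    rw [hwp, ← hz.link_last]
    exact hsw.ne_last hw.symm)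
  have := h _ hz.pivot_ne_last
  rw [link_apply_lt (hpw ▸ hpen), link_apply_lt (hpy ▸ hpen), ← hsw _ hz.pivot_ne_last,
    link_apply_pivot, ← hs _ hz.pivot_ne_last] at this
  exact hz.apply_pivot_ne this.symm

/-- Every geodesic between `link z ∉ X` and `link y ∉ X` passes through `z` or `y`. -/
lemma DualMVSet.eq_of_sib (hX : DualMVSet (Sierpinski p (m+1)) X) (hz : NonCorner z)
    (hzp : z (pen m) = z (Fin.last m)) (hs : Sib z y) (hzX : z ∈ X) (hyX : y ∈ X) : z = y := by
  by_contra hne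
  have hyz := (hs.ne_last hne).symm
  have hy : NonCorner y := ⟨pen m, by rwa [← hs _ (pen_lt_last hz.pos).ne, hzp, ne_comm]⟩
  have hzX' : link z ∉ X := fun h =>
    (DualMVSet.setLast_mem_iff hX hzX hz hyz).mp (hs.eq_setLast ▸ hyX) h
  have hyX' : link y ∉ X := fun h =>
    (DualMVSet.setLast_mem_iff hX hyX hy hyz.symm).mp (hs.symm.eq_setLast ▸ hzX) h
  refine SimpleGraph.not_visible_of_dist_eq_three (dist_link_link_eq_three hz hy hs hne)
    (fun w₁ w₂ h₁ h₂ h₃ => ?_) (hX.2 _ hzX' _ hyX')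
  rcases eq_or_eq_or_sib_link_of_adj_adj_adj hz hy hs hne h₁ h₂ h₃ with
    rfl | rfl | ⟨-, hw, hsw, h⟩
  · exact .inl hzX
  · exact .inr hyX
  · exact absurd h (not_sib_link_link_of_sib_link hz hzp hs hyz hw hsw)

lemma DualMVSet.setLast_mem (hX : DualMVSet (Sierpinski p (m+1)) X) (hxX : x ∈ X)
    (hx : NonCorner x) (e : Fin p) : setLast x e ∈ X := by
  obtain rfl | he := eq_or_ne e (x (Fin.last m))
  · rwa [setLast_apply_last]
  · exact (DualMVSet.setLast_mem_iff hX hxX hx he).mpr (DualMVSet.link_not_mem hX hxX hx)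

lemma DualMVSet.eq_pen (hX : DualMVSet (Sierpinski p (m+1)) X) (hxX : x ∈ X)
    (hx : NonCorner x) : ∀ t ≠ Fin.last m, x t = x (pen m) := by
  by_contra! ⟨t, ht, hxt⟩
  have hpen := (pen_lt_last hx.pos).ne
  have := DualMVSet.eq_of_sib hX (z := setLast x (x (pen m))) (y := setLast x (x t))
    ⟨t, by rwa [setLast_of_ne ht, setLast_last]⟩
    (by rw [setLast_of_ne hpen, setLast_last])
    ((sib_setLast x (x (pen m))).trans (sib_setLast x (x t)).symm)
    (DualMVSet.setLast_mem hX hxX hx _) (DualMVSet.setLast_mem hX hxX hx _)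
  exact hxt (by simpa using (congrFun this (Fin.last m)).symm)

end Visibility

section Recursion

variable {p k : ℕ}

lemma adj_cons_cons {a b : Fin p} {x y : Fin k → Fin p} :
    (Sierpinski p (k+1)).Adj (Fin.cons a x) (Fin.cons b y) ↔
      (a = b ∧ (Sierpinski p k).Adj x y) ∨ (a ≠ b ∧ x = (fun _ => b) ∧ y = (fun _ => a)) := by
  constructor
  · rintro ⟨h, hlt, hne, hgt⟩
    induction h using Fin.cases with
    | zero =>
      refine .inr ⟨by simpa using hne, funext fun s => ?_, funext fun s => ?_⟩
      · simpa using (hgt s.succ s.succ_pos).1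
      · simpa using (hgt s.succ s.succ_pos).2
    | succ h =>
      refine .inl ⟨by simpa using hlt 0 h.succ_pos, h, fun t ht => ?_, by simpa using hne,
        fun t ht => ?_⟩
      · simpa using hlt t.succ (Fin.succ_lt_succ_iff.mpr ht)
      · simpa using hgt t.succ (Fin.succ_lt_succ_iff.mpr ht)
  · rintro (⟨rfl, h, hlt, hne, hgt⟩ | ⟨hab, rfl, rfl⟩)
    · refine ⟨h.succ, fun t ht => ?_, by simpa using hne, fun t ht => ?_⟩
      · induction t using Fin.cases with
        | zero => rfl
        | succ t => simpa using hlt t (Fin.succ_lt_succ_iff.mp ht)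
      · induction t using Fin.cases with
        | zero => exact absurd ht (Fin.succ_pos h).not_gt
        | succ t => simpa using hgt t (Fin.succ_lt_succ_iff.mp ht)
    · refine ⟨0, fun t ht => absurd ht (Fin.not_lt_zero t), by simpa using hab, fun t ht => ?_⟩
      induction t using Fin.cases with
      | zero => exact absurd ht (lt_irrefl 0)
      | succ t => simp

def consHom (a : Fin p) : Sierpinski p k →g Sierpinski p (k+1) where
  toFun x := Fin.cons a x
  map_rel' h := adj_cons_cons.mpr (.inl ⟨rfl, h⟩)

lemma adj_cons_const_cons_const {a b : Fin p} (hab : a ≠ b) :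
    (Sierpinski p (k+1)).Adj (Fin.cons a fun _ => b) (Fin.cons b fun _ => a) :=
  adj_cons_cons.mpr (.inr ⟨hab, rfl, rfl⟩)

lemma cons_const (a : Fin p) : (Fin.cons a fun _ => a : Fin (k+1) → Fin p) = fun _ => a := by
  funext t
  induction t using Fin.cases <;> rfl

lemma preconnected : ∀ k, (Sierpinski p k).Preconnected
  | 0, u, v => by rw [Subsingleton.elim u v]
  | k+1, u, v => by
    rw [← Fin.cons_self_tail u, ← Fin.cons_self_tail v]
    by_cases huv : u 0 = v 0
    · rw [huv]
      exact (preconnected k (Fin.tail u) (Fin.tail v)).map (consHom (v 0))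
    · exact ((preconnected k (Fin.tail u) fun _ => v 0).map (consHom (u 0))).trans
        ((adj_cons_const_cons_const huv).reachable.trans
          ((preconnected k (fun _ => u 0) (Fin.tail v)).map (consHom (v 0))))

lemma dist_const_const_le : ∀ k (i j : Fin p),
    (Sierpinski p k).dist (fun _ => i) (fun _ => j) ≤ 2 ^ k - 1
  | 0, i, j => by simp [Subsingleton.elim (fun _ : Fin 0 => i) fun _ => j]
  | k+1, i, j => by
    obtain rfl | hij := eq_or_ne i j
    · simp
    have hreach := preconnected (p := p) (k+1)
    have h₁ : (Sierpinski p (k+1)).dist (Fin.cons i fun _ => i) (Fin.cons i fun _ => j) ≤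
        (Sierpinski p k).dist (fun _ => i) (fun _ => j) :=
      (preconnected k _ _).dist_map_le (consHom i)
    have h₂ : (Sierpinski p (k+1)).dist (Fin.cons j fun _ => i) (Fin.cons j fun _ => j) ≤
        (Sierpinski p k).dist (fun _ => i) (fun _ => j) :=
      (preconnected k _ _).dist_map_le (consHom j)
    have h₃ := SimpleGraph.dist_eq_one_iff_adj.mpr (adj_cons_const_cons_const (k := k) hij)
    have := dist_const_const_le k i j
    rw [← cons_const i, ← cons_const j]
    calc _ ≤ _ := (hreach _ (Fin.cons i fun _ => j)).dist_triangle_left _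
      _ ≤ _ := Nat.add_le_add_left ((hreach _ (Fin.cons j fun _ => i)).dist_triangle_left _) _
      _ ≤ 2 ^ (k+1) - 1 := by
        have := Nat.one_le_two_pow (n := k)
        rw [pow_succ]
        omega

/-- `potential j k x` is the distance from `x` to the corner `j^k`; only the fact that it is
`1`-Lipschitz is used. -/
def potential (j : Fin p) : (k : ℕ) → (Fin k → Fin p) → ℕ
  | 0, _ => 0
  | k+1, x => (if x 0 = j then 0 else 2 ^ k) + potential j k (Fin.tail x)

lemma potential_of_forall_eq {j : Fin p} : ∀ {k} {x : Fin k → Fin p}, (∀ t, x t = j) →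
    potential j k x = 0
  | 0, _, _ => rfl
  | k+1, x, h => by
    simp [potential, h, potential_of_forall_eq (x := Fin.tail x) fun t => h t.succ]

lemma potential_of_forall_ne {j : Fin p} : ∀ {k} {x : Fin k → Fin p}, (∀ t, x t ≠ j) →
    potential j k x = 2 ^ k - 1
  | 0, _, _ => rfl
  | k+1, x, h => by
    rw [potential, if_neg (h 0), potential_of_forall_ne (x := Fin.tail x) fun t => h t.succ,
      pow_succ]
    have := Nat.one_le_two_pow (n := k)
    omega

lemma potential_const (j b : Fin p) :
    potential j k (fun _ => b) = if b = j then 0 else 2 ^ k - 1 := by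
  split_ifs with hb
  · exact potential_of_forall_eq fun _ => hb
  · exact potential_of_forall_ne fun _ => hb

lemma potential_le_of_adj {j : Fin p} : ∀ {k} {x y : Fin k → Fin p},
    (Sierpinski p k).Adj x y → potential j k x ≤ potential j k y + 1
  | 0, x, y, h => by simp [potential]
  | k+1, x, y, h => by
    rw [← Fin.cons_self_tail x, ← Fin.cons_self_tail y] at h ⊢
    rcases adj_cons_cons.mp h with ⟨hxy, h⟩ | ⟨hxy, hx, hy⟩
    · simp only [potential, Fin.cons_zero, Fin.tail_cons, hxy]
      have := potential_le_of_adj (j := j) h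
      omega
    · simp only [potential, Fin.cons_zero, Fin.tail_cons, hx, hy, potential_const]
      have := Nat.one_le_two_pow (n := k)
      split_ifs <;> omega

lemma potential_le_length_add {j : Fin p} {x y : Fin k → Fin p}
    (w : (Sierpinski p k).Walk x y) : potential j k x ≤ w.length + potential j k y := by
  induction w with
  | nil => simp
  | cons h _ ih =>
    have := potential_le_of_adj (j := j) h
    rw [SimpleGraph.Walk.length_cons]
    omega

end Recursion

section Corners

variable {p m : ℕ} {x y u : Fin (m+1) → Fin p} {i j e f g : Fin p} {X : Set (Fin (m+1) → Fin p)}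

/-- The vertex `i^{m-1}ef`; it is `f` when `m = 0`. -/
def lastTwo (i e f : Fin p) : Fin (m+1) → Fin p := fun t =>
  if t = Fin.last m then f else if t = pen m then e else i

@[simp] lemma lastTwo_last : lastTwo (m := m) i e f (Fin.last m) = f := by simp [lastTwo]

lemma lastTwo_pen (hm : 0 < m) : lastTwo (m := m) i e f (pen m) = e := by
  simp [lastTwo, (pen_lt_last hm).ne]

lemma lastTwo_self : lastTwo (m := m) i i i = fun _ => i := by
  funext t
  simp [lastTwo]

lemma lastTwo_injective : Function.Injective (lastTwo (m := m) i e) := fun f g h => by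
  simpa using congrFun h (Fin.last m)

lemma adj_lastTwo (hfg : f ≠ g) : (Sierpinski p (m+1)).Adj (lastTwo i e f) (lastTwo i e g) :=
  adj_of_sib (fun t ht => by simp [lastTwo, ht]) (lastTwo_injective.ne hfg)

lemma link_lastTwo (hm : 0 < m) (hef : e ≠ f) :
    link (lastTwo (m := m) i e f) = lastTwo i f e := by
  have hp : pivot (lastTwo (m := m) i e f) = pen m :=
    pivot_eq_pen (by rwa [lastTwo_pen hm, lastTwo_last])
  funext t
  rcases lt_trichotomy t (pen m) with ht | rfl | ht
  · rw [link_apply_lt (hp ▸ ht)]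
    simp [lastTwo, ht.ne, (ht.trans (pen_lt_last hm)).ne]
  · rw [← hp, link_apply_pivot, hp, lastTwo_last, lastTwo_pen hm]
  · rw [link_apply_gt (hp ▸ ht), hp, lastTwo_pen hm, eq_last_of_pen_lt ht, lastTwo_last]

lemma adj_lastTwo_lastTwo (hm : 0 < m) (hef : e ≠ f) :
    (Sierpinski p (m+1)).Adj (lastTwo i e f) (lastTwo i f e) := by
  rw [← link_lastTwo hm hef]
  exact adj_link ⟨pen m, by rwa [lastTwo_pen hm, lastTwo_last]⟩

lemma mem_range_lastTwo_iff : y ∈ Set.range (lastTwo i i) ↔ ∀ t ≠ Fin.last m, y t = i := by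
  constructor
  · rintro ⟨e, rfl⟩ t ht
    simp [lastTwo, ht]
  · intro h
    refine ⟨y (Fin.last m), funext fun t => ?_⟩
    by_cases ht : t = Fin.last m
    · simp [ht]
    · simp [lastTwo, ht, h t ht]

lemma isClique_range_lastTwo : (Sierpinski p (m+1)).IsClique (Set.range (lastTwo i i)) := by
  rintro _ ⟨e, rfl⟩ _ ⟨f, rfl⟩ hne
  exact adj_lastTwo fun h => hne (h ▸ rfl)

lemma eq_link_of_adj_of_mem_range (hy : y ∈ Set.range (lastTwo i i))
    (hu : u ∉ Set.range (lastTwo i i)) (h : (Sierpinski p (m+1)).Adj u y) :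
    ∃ e ≠ i, 0 < m ∧ y = lastTwo i i e ∧ u = lastTwo i e i := by
  obtain ⟨e, rfl⟩ := hy
  rcases sib_or_link_of_adj h.symm with hs | ⟨hy, rfl⟩
  · refine absurd (mem_range_lastTwo_iff.mpr fun t ht => ?_) hu
    rw [← hs t ht]
    exact mem_range_lastTwo_iff.mp ⟨e, rfl⟩ t ht
  · have hei : e ≠ i := by
      rintro rfl
      obtain ⟨t, ht⟩ := hy
      simp [lastTwo] at ht
    exact ⟨e, hei, hy.pos, rfl, link_lastTwo hy.pos hei.symm⟩

/-- An excursion into the clique of `i^{m+1}` enters at some `i^m e` from `i^{m-1}ei` and leaves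
at some `i^m g` to `i^{m-1}gi`; the path through `i^{m-1}eg` and `i^{m-1}ge` replaces it. -/
lemma exists_detour {u u' b b' : Fin (m+1) → Fin p} (hu : u ∉ Set.range (lastTwo i i))
    (hu' : u' ∉ Set.range (lastTwo i i)) (hb : b ∈ Set.range (lastTwo i i))
    (hb' : b' ∈ Set.range (lastTwo i i)) (h : (Sierpinski p (m+1)).Adj u b)
    (h' : (Sierpinski p (m+1)).Adj b' u') (q : (Sierpinski p (m+1)).Walk b b') :
    ∃ w : (Sierpinski p (m+1)).Walk u u', w.length ≤ q.length + 2 ∧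
      ∀ y ∈ w.support, y ∉ Set.range (lastTwo i i) := by
  obtain ⟨e, hei, hm, rfl, rfl⟩ := eq_link_of_adj_of_mem_range hb hu h
  obtain ⟨g, hgi, -, rfl, rfl⟩ := eq_link_of_adj_of_mem_range hb' hu' h'.symm
  obtain rfl | heg := eq_or_ne e g
  · exact ⟨.nil, by simp, by simpa using hu⟩
  have hq : q.length ≠ 0 := fun h0 => heg (lastTwo_injective (q.eq_of_length_eq_zero h0))
  refine ⟨.cons (adj_lastTwo hgi.symm) (.cons (adj_lastTwo_lastTwo hm heg)
    (.cons (adj_lastTwo hei) .nil)), ?_, fun y hy hyT => ?_⟩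
  · simp only [SimpleGraph.Walk.length_cons, SimpleGraph.Walk.length_nil]
    omega
  have hpen := mem_range_lastTwo_iff.mp hyT _ (pen_lt_last hm).ne
  simp only [SimpleGraph.Walk.support_cons, SimpleGraph.Walk.support_nil, List.mem_cons,
    List.not_mem_nil, or_false] at hy
  rcases hy with rfl | rfl | rfl | rfl <;> rw [lastTwo_pen hm] at hpen
  exacts [hei hpen, hei hpen, hgi hpen, hgi hpen]

lemma dualMVSet_range_lastTwo (i : Fin p) :
    DualMVSet (Sierpinski p (m+1)) (Set.range (lastTwo i i)) := by
  refine ⟨SimpleGraph.mutualVisibilitySet_of_isClique isClique_range_lastTwo,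
    fun u hu v hv => ?_⟩
  obtain ⟨w₀, hw₀⟩ := (preconnected _ u v).exists_walk_length_eq_dist
  obtain ⟨w, hw, hwT⟩ :=
    SimpleGraph.exists_walk_avoiding (fun _ _ _ _ => exists_detour) w₀ hu hv
  exact SimpleGraph.visible_of_walk w (hw.trans hw₀.le) hwT

lemma not_nonCorner_const (i : Fin p) : ¬ NonCorner (fun _ : Fin (m+1) => i) :=
  fun ⟨_, h⟩ => h rfl

lemma eq_const_of_not_nonCorner (hx : ¬ NonCorner x) : x = fun _ => x (Fin.last m) :=
  funext fun t => by_contra fun h => hx ⟨t, h⟩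

lemma sib_of_adj_of_not_nonCorner (hx : ¬ NonCorner x) (h : (Sierpinski p (m+1)).Adj x y) :
    Sib x y :=
  (sib_or_link_of_adj h).resolve_right fun h => hx h.1

lemma simplicial_of_not_nonCorner (hx : ¬ NonCorner x) : Simplicial (Sierpinski p (m+1)) x :=
  fun _ _ hu hw huw => adj_of_sib
    ((sib_of_adj_of_not_nonCorner hx hu).symm.trans (sib_of_adj_of_not_nonCorner hx hw)) huw

lemma totalMVSet_iff : TotalMVSet (Sierpinski p (m+1)) X ↔ ∀ x ∈ X, ¬ NonCorner x :=
  ⟨fun hX _ hxX => TotalMVSet.not_nonCorner hX hxX, fun h =>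
    SimpleGraph.totalMVSet_of_simplicial (preconnected _) fun x hx =>
      simplicial_of_not_nonCorner (h x hx)⟩

lemma not_visible_const_const (hm : 0 < m) (hij : i ≠ j) (hX : lastTwo i i j ∈ X) :
    ¬ Visible (Sierpinski p (m+1)) X (fun _ => i) (fun _ => j) := by
  rintro ⟨w, ⟨-, hw⟩, hvis⟩
  have hnil : ¬ w.Nil := SimpleGraph.Walk.not_nil_of_ne fun h => hij (congrFun h 0)
  obtain ⟨e, he⟩ : w.snd ∈ Set.range (lastTwo i i) := mem_range_lastTwo_iff.mpr fun t ht =>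
    (sib_of_adj_of_not_nonCorner (not_nonCorner_const i) (w.adj_snd hnil) t ht).symm
  by_cases hej : e = j
  · subst hej
    have hmem : w.snd ∈ w.support := w.getVert_mem_support 1
    rcases hvis _ hmem (he ▸ hX) with h | h
    · exact (w.adj_snd hnil).ne h.symm
    · have := congrFun (he.trans h) (pen m)
      rw [lastTwo_pen hm] at this
      exact hij this
  · have hpot := potential_le_length_add (j := j) w.tail
    have hsnd : potential j (m+1) w.snd = 2 ^ (m+1) - 1 := by
      rw [← he]
      refine potential_of_forall_ne fun t => ?_
      unfold lastTwo
      split_ifs <;> assumption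
    rw [hsnd, potential_of_forall_eq fun _ => rfl] at hpot
    have := SimpleGraph.Walk.length_tail_add_one hnil
    have := dist_const_const_le (m+1) i j
    omega

lemma DualMVSet.range_lastTwo_subset (hX : DualMVSet (Sierpinski p (m+1)) X) (hxX : x ∈ X)
    (hx : NonCorner x) : Set.range (lastTwo (x (pen m)) (x (pen m))) ⊆ X := by
  rintro _ ⟨e, rfl⟩
  convert DualMVSet.setLast_mem hX hxX hx e using 1
  funext t
  by_cases ht : t = Fin.last m
  · simp [ht]
  · rw [setLast_of_ne ht, mem_range_lastTwo_iff.mp ⟨e, rfl⟩ t ht, DualMVSet.eq_pen hX hxX hx t ht]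

lemma DualMVSet.eq_range_lastTwo (hX : DualMVSet (Sierpinski p (m+1)) X) (hxX : x ∈ X)
    (hx : NonCorner x) : X = Set.range (lastTwo (x (pen m)) (x (pen m))) := by
  have hsub := DualMVSet.range_lastTwo_subset hX hxX hx
  refine subset_antisymm (fun z hz => ?_) hsub
  obtain ⟨j, hjX, hzj⟩ : ∃ j, (fun _ => j) ∈ X ∧ z ∈ Set.range (lastTwo j j) := by
    by_cases hzc : NonCorner z
    · exact ⟨z (pen m), lastTwo_self ▸ DualMVSet.range_lastTwo_subset hX hz hzc ⟨_, rfl⟩,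
        mem_range_lastTwo_iff.mpr (DualMVSet.eq_pen hX hz hzc)⟩
    · have hzconst := eq_const_of_not_nonCorner hzc
      exact ⟨_, hzconst ▸ hz, mem_range_lastTwo_iff.mpr fun t _ => congrFun hzconst t⟩
  obtain rfl : j = x (pen m) := by
    by_contra hj
    exact not_visible_const_const hx.pos (Ne.symm hj) (hsub ⟨j, rfl⟩)
      (hX.1 _ (lastTwo_self ▸ hsub ⟨_, rfl⟩) _ hjX)
  exact hzj

end Corners

section ThreeLetters

variable {m : ℕ} {X : Set (Fin (m+1) → Fin 3)}

lemma almostCorner_eq_lastTwo (i e : Fin 3) : almostCorner (m+1) i e = lastTwo i i e := by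
  funext t
  by_cases ht : t = Fin.last m
  · simp [ht, almostCorner]
  · have : (t : ℕ) ≠ m := fun h => ht (Fin.ext h)
    simp [almostCorner, lastTwo, ht, this]

lemma not_nonCorner_iff {x : Fin (m+1) → Fin 3} :
    ¬ NonCorner x ↔ x ∈ Set.range (corner (m+1)) := by
  refine ⟨fun hx => ⟨_, (eq_const_of_not_nonCorner hx).symm⟩, ?_⟩
  rintro ⟨i, rfl⟩
  exact not_nonCorner_const i

lemma totalMVSet_iff_subset :
    TotalMVSet (Sierpinski 3 (m+1)) X ↔ X ⊆ Set.range (corner (m+1)) := by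
  simp only [totalMVSet_iff, not_nonCorner_iff, Set.subset_def]

lemma dualMVSet_iff :
    DualMVSet (Sierpinski 3 (m+1)) X ↔
      X ⊆ Set.range (corner (m+1)) ∨ ∃ i, X = Set.range (almostCorner (m+1) i) := by
  have hrange : ∀ i, Set.range (almostCorner (m+1) i) = Set.range (lastTwo i i) := fun i =>
    congrArg Set.range (funext (almostCorner_eq_lastTwo i))
  constructor
  · intro hX
    by_cases h : ∃ x ∈ X, NonCorner x
    · obtain ⟨x, hxX, hx⟩ := h
      exact .inr ⟨_, (DualMVSet.eq_range_lastTwo hX hxX hx).trans (hrange _).symm⟩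
    · exact .inl fun x hx => not_nonCorner_iff.mp fun hnc => h ⟨x, hx, hnc⟩
  · rintro (hX | ⟨i, rfl⟩)
    · exact (totalMVSet_iff_subset.mpr hX).dualMVSet
    · exact hrange i ▸ dualMVSet_range_lastTwo i

lemma ncard_range_corner : (Set.range (corner (m+1))).ncard = 3 := by
  rw [Set.ncard_range_of_injective fun i j h => congrFun h 0, Nat.card_eq_fintype_card,
    Fintype.card_fin]

lemma ncard_range_almostCorner (i : Fin 3) : (Set.range (almostCorner (m+1) i)).ncard = 3 := by
  rw [Set.ncard_range_of_injective fun e f h => by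
      simpa [almostCorner] using congrFun h (Fin.last m),
    Nat.card_eq_fintype_card, Fintype.card_fin]

lemma range_corner (n : ℕ) : Set.range (corner n) = {corner n 0, corner n 1, corner n 2} := by
  rw [← Set.image_univ, show (Set.univ : Set (Fin 3)) = {0, 1, 2} by ext i; fin_cases i <;> simp,
    Set.image_insert_eq, Set.image_insert_eq, Set.image_singleton]

lemma range_almostCorner {n : ℕ} {i j k : Fin 3} (h : ({i, j, k} : Set (Fin 3)) = Set.univ) :
    Set.range (almostCorner n i) = {corner n i, almostCorner n i j, almostCorner n i k} := by
  rw [← Set.image_univ, ← h, Set.image_insert_eq, Set.image_insert_eq, Set.image_singleton]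
  congr
  funext t
  simp [almostCorner, corner]

lemma exists_insert_insert_eq_univ (i : Fin 3) : ∃ j k, ({i, j, k} : Set (Fin 3)) = Set.univ :=
  ⟨i + 1, i + 2, by ext j; fin_cases i <;> fin_cases j <;> simp⟩

lemma totalMVSet_and_ncard_eq_three_iff :
    TotalMVSet (Sierpinski 3 (m+1)) X ∧ X.ncard = 3 ↔ X = Set.range (corner (m+1)) := by
  rw [totalMVSet_iff_subset]
  refine ⟨fun h => Set.eq_of_subset_of_ncard_le h.1 (by rw [h.2, ncard_range_corner])
    (Set.toFinite _), ?_⟩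
  rintro rfl
  exact ⟨subset_rfl, ncard_range_corner⟩

lemma dualMVSet_and_ncard_eq_three_iff :
    DualMVSet (Sierpinski 3 (m+1)) X ∧ X.ncard = 3 ↔
      X = Set.range (corner (m+1)) ∨ ∃ i, X = Set.range (almostCorner (m+1) i) := by
  rw [dualMVSet_iff]
  constructor
  · rintro ⟨hX | hX, h3⟩
    · exact .inl (totalMVSet_and_ncard_eq_three_iff.mp ⟨totalMVSet_iff_subset.mpr hX, h3⟩)
    · exact .inr hX
  · rintro (rfl | ⟨i, rfl⟩)
    · exact ⟨.inl subset_rfl, ncard_range_corner⟩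
    · exact ⟨.inr ⟨i, rfl⟩, ncard_range_almostCorner i⟩

lemma maxCard_totalMVSet : maxCard (TotalMVSet (Sierpinski 3 (m+1))) = 3 :=
  maxCard_eq ⟨_, totalMVSet_iff_subset.mpr subset_rfl, ncard_range_corner⟩ fun _ hX =>
    (Set.ncard_le_ncard (totalMVSet_iff_subset.mp hX) (Set.toFinite _)).trans_eq
      ncard_range_corner

lemma maxCard_dualMVSet : maxCard (DualMVSet (Sierpinski 3 (m+1))) = 3 := by
  refine maxCard_eq ⟨_, (totalMVSet_iff_subset.mpr subset_rfl).dualMVSet, ncard_range_corner⟩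
    fun X hX => ?_
  rcases dualMVSet_iff.mp hX with hX | ⟨i, rfl⟩
  · exact (Set.ncard_le_ncard hX (Set.toFinite _)).trans_eq ncard_range_corner
  · exact (ncard_range_almostCorner i).le

end ThreeLetters

end Sierpinski

/-- `μ_t(S_3^n) = μ_d(S_3^n) = 3`; `{0^n,1^n,2^n}` is the unique maximum total
mutual-visibility set, and the maximum dual mutual-visibility sets are exactly
`{0^n,1^n,2^n}` and the three sets `{i^n, i^{n-1}j, i^{n-1}k}` with `{i,j,k} = {0,1,2}`. -/
theorem stmt_11 (n : ℕ) (hn : 1 ≤ n) :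
    maxCard (TotalMVSet (Sierpinski 3 n)) = 3 ∧
    maxCard (DualMVSet (Sierpinski 3 n)) = 3 ∧
    {X : Set (Fin n → Fin 3) | TotalMVSet (Sierpinski 3 n) X ∧ X.ncard = 3} =
      {({corner n 0, corner n 1, corner n 2} : Set (Fin n → Fin 3))} ∧
    {X : Set (Fin n → Fin 3) | DualMVSet (Sierpinski 3 n) X ∧ X.ncard = 3} =
      insert ({corner n 0, corner n 1, corner n 2} : Set (Fin n → Fin 3))
        {X : Set (Fin n → Fin 3) | ∃ i j k : Fin 3,
          ({i, j, k} : Set (Fin 3)) = Set.univ ∧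
          X = ({corner n i, almostCorner n i j, almostCorner n i k} :
            Set (Fin n → Fin 3))} := by
  obtain ⟨m, rfl⟩ : ∃ m, n = m + 1 := ⟨n - 1, by omega⟩
  rw [← Sierpinski.range_corner]
  refine ⟨Sierpinski.maxCard_totalMVSet, Sierpinski.maxCard_dualMVSet,
    Set.ext fun X => Sierpinski.totalMVSet_and_ncard_eq_three_iff,
    Set.ext fun X => Sierpinski.dualMVSet_and_ncard_eq_three_iff.trans
      ((or_congr_right ⟨?_, ?_⟩).trans Set.mem_insert_iff.symm)⟩
  · rintro ⟨i, rfl⟩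
    obtain ⟨j, k, h⟩ := Sierpinski.exists_insert_insert_eq_univ i
    exact ⟨i, j, k, h, Sierpinski.range_almostCorner h⟩
  · rintro ⟨i, j, k, h, rfl⟩
    exact ⟨i, (Sierpinski.range_almostCorner h).symm⟩
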